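/- Let W, T1, Y1, X2, Z2, Y2 be discrete random variables such that Z2 is a deterministic function of X2, and X1 - W - X2 is a Markov chain with T1 a function of X1 and Y1 a function of X1 (for some discrete X1). If additionally T1 is conditionally independent of Z2 given W, then H(Y1 | W, T1) + H(Y2 | W, Z2) ≥ H(Y1 | W) whenever Y2 given (W, X2) has conditional entropy equal to H(T1 | W, X2) (injectivity: H(Y2 | W, X2) = H(T1 | W, X2)). -/

import Mathlib

open Finset Real

section Preliminaries

variable {Ω : Type} [Fintype Ω]

/-- Probability that random variable `X` equals `a` under pmf `μ` on a finite sample space. -/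
noncomputable def prob {α : Type} [Fintype α] [DecidableEq α]
    (μ : Ω → ℝ) (X : Ω → α) (a : α) : ℝ :=
  ∑ ω, if X ω = a then μ ω else 0

/-- `μ` is a probability mass function on the finite sample space. -/
def IsPMF (μ : Ω → ℝ) : Prop := (∀ ω, 0 ≤ μ ω) ∧ ∑ ω, μ ω = 1

/-- Shannon entropy of a random variable (natural logarithm base). -/
noncomputable def H {α : Type} [Fintype α] [DecidableEq α]
    (μ : Ω → ℝ) (X : Ω → α) : ℝ :=
  -∑ a, prob μ X a * Real.log (prob μ X a)

/-- The joint random variable `(X, Y)`. -/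
def pair {α β : Type} (X : Ω → α) (Y : Ω → β) : Ω → α × β := fun ω => (X ω, Y ω)

/-- Conditional entropy `H(X | Y)`. -/
noncomputable def condH {α β : Type} [Fintype α] [DecidableEq α] [Fintype β] [DecidableEq β]
    (μ : Ω → ℝ) (X : Ω → α) (Y : Ω → β) : ℝ :=
  H μ (pair X Y) - H μ Y

/-- Mutual information `I(X ; Y)`. -/
noncomputable def MI {α β : Type} [Fintype α] [DecidableEq α] [Fintype β] [DecidableEq β]
    (μ : Ω → ℝ) (X : Ω → α) (Y : Ω → β) : ℝ :=
  H μ X + H μ Y - H μ (pair X Y)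

/-- Conditional mutual information `I(X ; Y | Z)`. -/
noncomputable def cMI {α β γ : Type} [Fintype α] [DecidableEq α] [Fintype β] [DecidableEq β]
    [Fintype γ] [DecidableEq γ] (μ : Ω → ℝ) (X : Ω → α) (Y : Ω → β) (Z : Ω → γ) : ℝ :=
  condH μ X Z + condH μ Y Z - condH μ (pair X Y) Z

/-- Independence of two random variables. -/
def Indep {α β : Type} [Fintype α] [DecidableEq α] [Fintype β] [DecidableEq β]
    (μ : Ω → ℝ) (X : Ω → α) (Y : Ω → β) : Prop :=
  ∀ a b, prob μ (pair X Y) (a, b) = prob μ X a * prob μ Y b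

/-- Conditional independence of `X` and `Y` given `Z`, i.e. the Markov chain `X - Z - Y`. -/
def CondIndep {α β γ : Type} [Fintype α] [DecidableEq α] [Fintype β] [DecidableEq β]
    [Fintype γ] [DecidableEq γ] (μ : Ω → ℝ) (X : Ω → α) (Y : Ω → β) (Z : Ω → γ) : Prop :=
  ∀ a b c, prob μ (pair (pair X Y) Z) ((a, b), c) * prob μ Z c
    = prob μ (pair X Z) (a, c) * prob μ (pair Y Z) (b, c)

/-- Shannon entropy of a pmf on a finite alphabet. -/
noncomputable def Hp {α : Type} [Fintype α] (p : α → ℝ) : ℝ :=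
  -∑ a, p a * Real.log (p a)

/-- `p` is a probability distribution on the finite alphabet. -/
def IsDist {α : Type} [Fintype α] (p : α → ℝ) : Prop := (∀ a, 0 ≤ p a) ∧ ∑ a, p a = 1

/-- Point mass at a given element. -/
noncomputable def delta {α : Type} [DecidableEq α] (a0 : α) : α → ℝ :=
  fun a => if a = a0 then 1 else 0

end Preliminaries

/-! The bound is the chain `H(Y₁|W) ≤ H(Y₁,T₁|W) = H(Y₁|W,T₁) + H(T₁|W)`. The Markov chain
`X₁ - W - X₂` passes to `T₁ = t₁(X₁)`, so `H(T₁|W) = H(T₁|W,X₂)`, which equals `H(Y₂|W,X₂)` by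
injectivity, and conditioning on the coarser `Z₂ = z₂(X₂)` can only increase entropy. -/

section Entropy

variable {Ω : Type} [Fintype Ω] {μ : Ω → ℝ}
variable {α β γ : Type} [Fintype α] [DecidableEq α] [Fintype β] [DecidableEq β]
  [Fintype γ] [DecidableEq γ]

lemma prob_nonneg (hμ : IsPMF μ) (X : Ω → α) (a : α) : 0 ≤ prob μ X a :=
  sum_nonneg fun ω _ => by split_ifs <;> simp [hμ.1 ω]

lemma sum_prob_mul (X : Ω → α) (F : α → ℝ) :
    ∑ a, prob μ X a * F a = ∑ ω, μ ω * F (X ω) := by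
  simp only [prob, sum_mul, ite_mul, zero_mul]
  rw [sum_comm]
  simp

lemma sum_prob_eq_one (hμ : IsPMF μ) (X : Ω → α) : ∑ a, prob μ X a = 1 := by
  simpa [hμ.2] using sum_prob_mul (μ := μ) X fun _ => 1

lemma sum_prob_pair (A : Ω → α) (B : Ω → β) (b : β) :
    ∑ a, prob μ (pair A B) (a, b) = prob μ B b := by
  simp only [prob, pair, Prod.mk.injEq, ite_and]
  rw [sum_comm]
  simp

lemma prob_le_prob_comp (hμ : IsPMF μ) (X : Ω → α) (f : α → β) (a : α) :
    prob μ X a ≤ prob μ (fun ω => f (X ω)) (f a) :=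
  sum_le_sum fun ω _ => by split_ifs <;> simp_all [hμ.1 ω]

lemma prob_comp_of_injective (X : Ω → α) {f : α → β} (hf : Function.Injective f) (a : α) :
    prob μ (fun ω => f (X ω)) (f a) = prob μ X a := by
  simp only [prob, hf.eq_iff]

lemma H_comp_eq_neg_sum (X : Ω → α) (f : α → β) :
    H μ (fun ω => f (X ω)) = -∑ a, prob μ X a * log (prob μ (fun ω => f (X ω)) (f a)) := by
  rw [H, sum_prob_mul, sum_prob_mul]

lemma H_comp_le (hμ : IsPMF μ) (X : Ω → α) (f : α → β) : H μ (fun ω => f (X ω)) ≤ H μ X := by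
  rw [H_comp_eq_neg_sum, H, neg_le_neg_iff]
  refine sum_le_sum fun a _ => ?_
  rcases (prob_nonneg hμ X a).eq_or_lt with h | h
  · simp [← h]
  · exact mul_le_mul_of_nonneg_left (log_le_log h (prob_le_prob_comp hμ X f a)) h.le

lemma H_comp_of_injective (X : Ω → α) {f : α → β} (hf : Function.Injective f) :
    H μ (fun ω => f (X ω)) = H μ X := by
  rw [H_comp_eq_neg_sum]
  simp only [prob_comp_of_injective X hf, H]

lemma prob_pair_comp_left (X : Ω → α) (Z : Ω → γ) (f : α → β) (b : β) (c : γ) :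
    prob μ (pair (fun ω => f (X ω)) Z) (b, c)
      = ∑ a with f a = b, prob μ (pair X Z) (a, c) := by
  simp only [prob, pair, Prod.mk.injEq, ite_and]
  rw [sum_comm]
  simp

lemma prob_pair_pair_comp_left {δ : Type} [Fintype δ] [DecidableEq δ]
    (X : Ω → α) (Y : Ω → δ) (Z : Ω → γ) (f : α → β) (b : β) (d : δ) (c : γ) :
    prob μ (pair (pair (fun ω => f (X ω)) Y) Z) ((b, d), c)
      = ∑ a with f a = b, prob μ (pair (pair X Y) Z) ((a, d), c) := by
  simp only [prob, pair, Prod.mk.injEq, ite_and]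
  rw [sum_comm]
  simp

lemma CondIndep.comp_left {δ : Type} [Fintype δ] [DecidableEq δ]
    {X : Ω → α} {Y : Ω → δ} {Z : Ω → γ} (h : CondIndep μ X Y Z) (f : α → β) :
    CondIndep μ (fun ω => f (X ω)) Y Z := by
  intro b d c
  rw [prob_pair_pair_comp_left, prob_pair_comp_left, sum_mul, sum_mul]
  exact sum_congr rfl fun a _ => h a d c

lemma CondIndep.H_pair_pair_add_H (hμ : IsPMF μ) {A : Ω → α} {B : Ω → β} {C : Ω → γ}
    (h : CondIndep μ A B C) :
    H μ (pair (pair A B) C) + H μ C = H μ (pair A C) + H μ (pair B C) := by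
  set R := pair (pair A B) C
  have hC : H μ C = -∑ w, prob μ R w * log (prob μ C w.2) := H_comp_eq_neg_sum R (·.2)
  have hAC : H μ (pair A C) = -∑ w, prob μ R w * log (prob μ (pair A C) (w.1.1, w.2)) :=
    H_comp_eq_neg_sum R fun w => (w.1.1, w.2)
  have hBC : H μ (pair B C) = -∑ w, prob μ R w * log (prob μ (pair B C) (w.1.2, w.2)) :=
    H_comp_eq_neg_sum R fun w => (w.1.2, w.2)
  have hlog : ∀ w : (α × β) × γ,
      prob μ R w * log (prob μ R w) + prob μ R w * log (prob μ C w.2)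
        = prob μ R w * log (prob μ (pair A C) (w.1.1, w.2))
          + prob μ R w * log (prob μ (pair B C) (w.1.2, w.2)) := by
    rintro ⟨⟨a, b⟩, c⟩
    rcases (prob_nonneg hμ R ((a, b), c)).eq_or_lt with hw | hw
    · simp [← hw]
    have pos {δ : Type} [Fintype δ] [DecidableEq δ] (f : (α × β) × γ → δ) :
        prob μ (fun ω => f (R ω)) (f ((a, b), c)) ≠ 0 :=
      (hw.trans_le (prob_le_prob_comp hμ R f _)).ne'
    have hC0 : prob μ C c ≠ 0 := pos (·.2)
    have hAC0 : prob μ (pair A C) (a, c) ≠ 0 := pos fun w => (w.1.1, w.2)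
    have hBC0 : prob μ (pair B C) (b, c) ≠ 0 := pos fun w => (w.1.2, w.2)
    rw [← mul_add, ← mul_add, ← log_mul hw.ne' hC0, ← log_mul hAC0 hBC0]
    exact congrArg (fun x => prob μ R ((a, b), c) * log x) (h a b c)
  have hsum := sum_congr rfl fun w (_ : w ∈ univ) => hlog w
  rw [sum_add_distrib, sum_add_distrib] at hsum
  rw [hC, hAC, hBC, H]
  linarith

lemma sub_le_mul_log_sub_log {p r : ℝ} (hp : 0 < p) (hr : 0 < r) :
    p - r ≤ p * (log p - log r) := by
  have h := mul_le_mul_of_nonneg_left (log_le_sub_one_of_pos (div_pos hr hp)) hp.le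
  rw [log_div hr.ne' hp.ne', mul_sub, mul_sub, mul_div_cancel₀ r hp.ne'] at h
  linarith

lemma sum_sub_sum_le_sum_mul_log_sub_log {ι : Type} [Fintype ι] {p r : ι → ℝ}
    (hp : ∀ i, 0 ≤ p i) (hr : ∀ i, 0 ≤ r i) (hpr : ∀ i, 0 < p i → 0 < r i) :
    ∑ i, p i - ∑ i, r i ≤ ∑ i, p i * (log (p i) - log (r i)) := by
  rw [← sum_sub_distrib]
  refine sum_le_sum fun i _ => ?_
  rcases (hp i).eq_or_lt with h | h
  · simp [← h, hr i]
  · exact sub_le_mul_log_sub_log h (hpr i h)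

lemma condH_le_condH_comp (hμ : IsPMF μ) (Y : Ω → α) (X : Ω → β) (g : β → γ) :
    condH μ Y X ≤ condH μ Y (fun ω => g (X ω)) := by
  set G := fun ω => g (X ω)
  set p := prob μ (pair Y X)
  set pX := prob μ X
  set q := prob μ (pair Y G)
  set qG := prob μ G
  -- compare `p` (Gibbs) with the law of `(Y, X)` under which `Y - g X - X` is a Markov chain
  set r : α × β → ℝ := fun z => pX z.2 / qG (g z.2) * q (z.1, g z.2)
  have hpX z : p z ≤ pX z.2 := prob_le_prob_comp hμ (pair Y X) Prod.snd z
  have hq z : p z ≤ q (z.1, g z.2) := prob_le_prob_comp hμ (pair Y X) (fun z => (z.1, g z.2)) z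
  have hqG x : pX x ≤ qG (g x) := prob_le_prob_comp hμ X g x
  have hr_nonneg z : 0 ≤ r z :=
    mul_nonneg (div_nonneg (prob_nonneg hμ X _) (prob_nonneg hμ G _)) (prob_nonneg hμ _ _)
  have hr_pos z (hz : 0 < p z) : 0 < r z := by
    have hX0 := hz.trans_le (hpX z)
    exact mul_pos (div_pos hX0 (hX0.trans_le (hqG z.2))) (hz.trans_le (hq z))
  have hr_sum : ∑ z, r z ≤ 1 := by
    calc ∑ z, r z = ∑ x, pX x / qG (g x) * ∑ y, q (y, g x) := by
          rw [Fintype.sum_prod_type_right]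
          simp only [r, mul_sum]
      _ = ∑ x, pX x := by
          refine sum_congr rfl fun x _ => ?_
          rw [sum_prob_pair, div_mul_cancel_of_imp]
          exact fun h => le_antisymm (h ▸ hqG x) (prob_nonneg hμ X x)
      _ ≤ 1 := (sum_prob_eq_one hμ X).le
  have hlog z : p z * (log (p z) - log (r z)) = p z * log (p z) - p z * log (pX z.2)
      - p z * log (q (z.1, g z.2)) + p z * log (qG (g z.2)) := by
    rcases (prob_nonneg hμ (pair Y X) z).eq_or_lt with hz | hz
    · simp [p, ← hz]
    have hX0 := hz.trans_le (hpX z)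
    have hG0 := hX0.trans_le (hqG z.2)
    rw [log_mul (div_pos hX0 hG0).ne' (hz.trans_le (hq z)).ne', log_div hX0.ne' hG0.ne']
    ring
  have gibbs : ∑ z, p z - ∑ z, r z ≤ ∑ z, p z * (log (p z) - log (r z)) :=
    sum_sub_sum_le_sum_mul_log_sub_log (prob_nonneg hμ _) hr_nonneg hr_pos
  simp only [hlog, sum_add_distrib, sum_sub_distrib, p, sum_prob_eq_one hμ] at gibbs
  have hX : H μ X = -∑ z, p z * log (pX z.2) := H_comp_eq_neg_sum (pair Y X) Prod.snd
  have hYG : H μ (pair Y G) = -∑ z, p z * log (q (z.1, g z.2)) :=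
    H_comp_eq_neg_sum (pair Y X) fun z => (z.1, g z.2)
  have hG : H μ G = -∑ z, p z * log (qG (g z.2)) := H_comp_eq_neg_sum (pair Y X) fun z => g z.2
  rw [condH, condH, hX, hYG, hG, H]
  linarith

lemma condH_le_condH_pair_left (hμ : IsPMF μ) (X : Ω → α) (Y : Ω → β) (Z : Ω → γ) :
    condH μ X Z ≤ condH μ (pair X Y) Z := by
  have : H μ (pair X Z) ≤ H μ (pair (pair X Y) Z) :=
    H_comp_le hμ (pair (pair X Y) Z) fun w => (w.1.1, w.2)
  rw [condH, condH]
  linarith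

lemma condH_pair_left (X : Ω → α) (Y : Ω → β) (Z : Ω → γ) :
    condH μ (pair X Y) Z = condH μ X (pair Z Y) + condH μ Y Z := by
  have hXZY : H μ (pair X (pair Z Y)) = H μ (pair (pair X Y) Z) :=
    H_comp_of_injective (pair (pair X Y) Z) (f := fun w => (w.1.1, (w.2, w.1.2)))
      fun _ _ h => by simp_all [Prod.ext_iff]
  have hZY : H μ (pair Z Y) = H μ (pair Y Z) :=
    H_comp_of_injective (pair Y Z) Prod.swap_injective
  rw [condH, condH, condH, hXZY, hZY]
  ring

lemma CondIndep.condH_pair_eq (hμ : IsPMF μ) {A : Ω → α} {B : Ω → β} {C : Ω → γ}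
    (h : CondIndep μ A B C) : condH μ A (pair C B) = condH μ A C := by
  have hACB : H μ (pair A (pair C B)) = H μ (pair (pair A B) C) :=
    H_comp_of_injective (pair (pair A B) C) (f := fun w => (w.1.1, (w.2, w.1.2)))
      fun _ _ h => by simp_all [Prod.ext_iff]
  have hCB : H μ (pair C B) = H μ (pair B C) :=
    H_comp_of_injective (pair B C) Prod.swap_injective
  rw [condH, condH, hACB, hCB]
  linarith [h.H_pair_pair_add_H hμ]

end Entropy

theorem stmt6_general {Ω : Type} [Fintype Ω] {𝒲 𝒳₁ 𝒳₂ 𝒯 𝒴₁ 𝒴₂ 𝒵 : Type}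
    [Fintype 𝒲] [DecidableEq 𝒲] [Fintype 𝒳₁] [DecidableEq 𝒳₁]
    [Fintype 𝒳₂] [DecidableEq 𝒳₂] [Fintype 𝒯] [DecidableEq 𝒯]
    [Fintype 𝒴₁] [DecidableEq 𝒴₁] [Fintype 𝒴₂] [DecidableEq 𝒴₂]
    [Fintype 𝒵] [DecidableEq 𝒵]
    (μ : Ω → ℝ) (hμ : IsPMF μ)
    (W : Ω → 𝒲) (X1 : Ω → 𝒳₁) (X2 : Ω → 𝒳₂)
    (T1 : Ω → 𝒯) (Y1 : Ω → 𝒴₁) (Y2 : Ω → 𝒴₂) (Z2 : Ω → 𝒵)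
    (z2 : 𝒳₂ → 𝒵) (t1 : 𝒳₁ → 𝒯)
    (hZ2 : Z2 = fun ω => z2 (X2 ω))
    (hT1 : T1 = fun ω => t1 (X1 ω))
    (hMarkov : CondIndep μ X1 X2 W)
    (hinj : condH μ Y2 (pair W X2) = condH μ T1 (pair W X2)) :
    condH μ Y1 W ≤ condH μ Y1 (pair W T1) + condH μ Y2 (pair W Z2) := by
  have hT1X2 : CondIndep μ T1 X2 W := hT1 ▸ hMarkov.comp_left t1
  have hcoarse : condH μ Y2 (pair W X2) ≤ condH μ Y2 (pair W Z2) :=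
    hZ2 ▸ condH_le_condH_comp hμ Y2 (pair W X2) fun w => (w.1, z2 w.2)
  calc condH μ Y1 W ≤ condH μ (pair Y1 T1) W := condH_le_condH_pair_left hμ Y1 T1 W
    _ = condH μ Y1 (pair W T1) + condH μ T1 W := condH_pair_left Y1 T1 W
    _ = condH μ Y1 (pair W T1) + condH μ Y2 (pair W X2) := by
      rw [hinj, hT1X2.condH_pair_eq hμ]
    _ ≤ condH μ Y1 (pair W T1) + condH μ Y2 (pair W Z2) := by gcongr

theorem stmt6 {Ω : Type} [Fintype Ω] {𝒲 𝒳₁ 𝒳₂ 𝒯 𝒴₁ 𝒴₂ 𝒵 : Type}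
    [Fintype 𝒲] [DecidableEq 𝒲] [Fintype 𝒳₁] [DecidableEq 𝒳₁]
    [Fintype 𝒳₂] [DecidableEq 𝒳₂] [Fintype 𝒯] [DecidableEq 𝒯]
    [Fintype 𝒴₁] [DecidableEq 𝒴₁] [Fintype 𝒴₂] [DecidableEq 𝒴₂]
    [Fintype 𝒵] [DecidableEq 𝒵]
    (μ : Ω → ℝ) (hμ : IsPMF μ)
    (W : Ω → 𝒲) (X1 : Ω → 𝒳₁) (X2 : Ω → 𝒳₂)
    (T1 : Ω → 𝒯) (Y1 : Ω → 𝒴₁) (Y2 : Ω → 𝒴₂) (Z2 : Ω → 𝒵)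
    (z2 : 𝒳₂ → 𝒵) (t1 : 𝒳₁ → 𝒯) (y1 : 𝒳₁ → 𝒴₁)
    (hZ2 : Z2 = fun ω => z2 (X2 ω))
    (hT1 : T1 = fun ω => t1 (X1 ω))
    (hY1 : Y1 = fun ω => y1 (X1 ω))
    (hMarkov : CondIndep μ X1 X2 W)
    (hTZ : CondIndep μ T1 Z2 W)
    (hinj : condH μ Y2 (pair W X2) = condH μ T1 (pair W X2)) :
    condH μ Y1 W ≤ condH μ Y1 (pair W T1) + condH μ Y2 (pair W Z2) :=
  stmt6_general μ hμ W X1 X2 T1 Y1 Y2 Z2 z2 t1 hZ2 hT1 hMarkov hinj
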